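/- arXiv:1909.02524 — 3 statements merged into one kernel-verified Lean document; each statement's English description precedes it below -/
import Mathlib

section
/- Let L ⊣ R : B → A be an adjunction between lfp categories with R finitary, L fully faithful, and L preserving monomorphisms. Then X is finitely generated in A if and only if LX is finitely generated in B. -/
open CategoryTheory Limits Opposite

universe w v u v₂ u₂

section Defs
variable {C : Type u} [Category.{v} C]

/-- An object is finitely presentable if its hom-functor preserves filtered colimits. -/
def IsFinitelyPresentable (X : C) : Prop :=
  ∀ (J : Type v) [SmallCategory J] [IsFiltered J],
    PreservesColimitsOfShape J (coyoneda.obj (op X))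

/-- An object is finitely generated if its hom-functor preserves filtered colimits of
diagrams all of whose connecting morphisms are monomorphisms. -/
def IsFinitelyGenerated (X : C) : Prop :=
  ∀ (J : Type v) [SmallCategory J] [IsFiltered J] (D : J ⥤ C),
    (∀ ⦃i j : J⦄ (f : i ⟶ j), Mono (D.map f)) →
    ∀ (c : Cocone D), Nonempty (IsColimit c) →
      Nonempty (IsColimit ((coyoneda.obj (op X)).mapCocone c))

/-- A presentation of an object as a filtered colimit of finitely presentable objects. -/
structure FilteredFpPresentation (X : C) : Type (max u (v + 1)) where
  J : Type v
  [cat : SmallCategory J]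
  [filt : IsFiltered J]
  D : J ⥤ C
  fp : ∀ j, _root_.IsFinitelyPresentable (D.obj j)
  c : Cocone D
  isColimit : Nonempty (IsColimit c)
  iso : Nonempty (c.pt ≅ X)

/-- A locally finitely presentable category. -/
def IsLFP (C : Type u) [Category.{v} C] : Prop :=
  HasColimits C ∧
  EssentiallySmall.{v} (ObjectProperty.FullSubcategory (fun X : C => _root_.IsFinitelyPresentable X)) ∧
  ∀ X : C, Nonempty (FilteredFpPresentation X)

end Defs

/-!
A functor `F` that preserves filtered colimits and monomorphisms sends a filtered colimit of
monomorphisms to another one, so any object whose hom-functor factors as `F ⋙ Hom(X, -)` inherits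
finite generation from `X`. For `L ⊣ R` the adjunction gives `Hom(LX, -) ≅ R ⋙ Hom(X, -)`, and
full faithfulness of `L` gives `Hom(X, -) ≅ L ⋙ Hom(LX, -)`; since `L` is a left adjoint it
preserves all colimits.
-/

theorem IsFinitelyGenerated.of_coyoneda_iso {C : Type u} [Category.{v} C] {D : Type u₂}
    [Category.{v} D] (F : C ⥤ D) [PreservesFilteredColimitsOfSize.{v, v} F]
    [F.PreservesMonomorphisms] {X : D} {Y : C} (hX : IsFinitelyGenerated X)
    (e : F ⋙ coyoneda.obj (op X) ≅ coyoneda.obj (op Y)) : IsFinitelyGenerated Y := by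
  intro J _ _ K hK c ⟨hc⟩
  obtain ⟨hFc⟩ := hX J (K ⋙ F) (fun _ _ f => F.map_mono (K.map f)) (F.mapCocone c)
    ⟨isColimitOfPreserves F hc⟩
  exact ⟨IsColimit.mapCoconeEquiv e hFc⟩

def CategoryTheory.Functor.FullyFaithful.compCoyonedaObjIso {C : Type u} [Category.{v} C]
    {D : Type u₂} [Category.{v} D] {L : C ⥤ D} (hL : L.FullyFaithful) (X : C) :
    L ⋙ coyoneda.obj (op (L.obj X)) ≅ coyoneda.obj (op X) :=
  NatIso.ofComponents (fun _ => hL.homEquiv.symm.toIso)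
    (fun _ => by ext; exact hL.map_injective (by simp))

section Adjunction

variable {A : Type u} [Category.{v} A] {B : Type u₂} [Category.{v} B] {L : A ⥤ B} {R : B ⥤ A}

theorem IsFinitelyGenerated.leftAdjoint_obj (adj : L ⊣ R)
    [PreservesFilteredColimitsOfSize.{v, v} R] {X : A} (hX : IsFinitelyGenerated X) :
    IsFinitelyGenerated (L.obj X) :=
  have := Functor.preservesMonomorphisms_of_adjunction adj
  hX.of_coyoneda_iso R (adj.compCoyonedaIso.app (op X)).symm

theorem IsFinitelyGenerated.of_leftAdjoint_obj (adj : L ⊣ R) [L.Full] [L.Faithful]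
    [L.PreservesMonomorphisms] {X : A} (hLX : IsFinitelyGenerated (L.obj X)) :
    IsFinitelyGenerated X :=
  have := adj.leftAdjoint_preservesColimits
  hLX.of_coyoneda_iso L ((Functor.FullyFaithful.ofFullyFaithful L).compCoyonedaObjIso X)

end Adjunction

theorem stmt3_general {A : Type u} [Category.{v} A] {B : Type u₂} [Category.{v} B]
    (L : A ⥤ B) (R : B ⥤ A) (adj : L ⊣ R)
    [PreservesFilteredColimitsOfSize.{v, v} R] [L.Full] [L.Faithful]
    [L.PreservesMonomorphisms]
    (X : A) :
    IsFinitelyGenerated X ↔ IsFinitelyGenerated (L.obj X) :=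
  ⟨IsFinitelyGenerated.leftAdjoint_obj adj, IsFinitelyGenerated.of_leftAdjoint_obj adj⟩

/-- For an adjunction `L ⊣ R` between lfp categories with `R` finitary,
`L` fully faithful and preserving monomorphisms, `X` is finitely generated in `A` iff
`L X` is finitely generated in `B`. -/
theorem stmt3 {A : Type u} [Category.{v} A] {B : Type u₂} [Category.{v} B]
    (hA : IsLFP A) (hB : IsLFP B) (L : A ⥤ B) (R : B ⥤ A) (adj : L ⊣ R)
    [PreservesFilteredColimitsOfSize.{v, v} R] [L.Full] [L.Faithful]
    [L.PreservesMonomorphisms]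
    (X : A) :
    IsFinitelyGenerated X ↔ IsFinitelyGenerated (L.obj X) :=
  stmt3_general L R adj X
end

section
/- Let T be a finitary monad on an lfp category A. Every free algebra (TX, μ_X) on a finitely presentable object X is generated by a finitely generated subobject: factorizing the unit η_X as a strong epimorphism e : X ↠ M followed by a monomorphism m : M ↪ TX, the subobject m does not factor through any proper subalgebra of (TX, μ_X). -/
open CategoryTheory Limits Opposite

universe w v u v₂ u₂

section Alg
variable {A : Type u} [Category.{v} A] {T : Monad A}

/-- A `T`-algebra is generated by a subobject `m : M ⟶ A` of the base category if `m`
factors through no proper subalgebra. -/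
def GeneratedBy (Aalg : T.Algebra) {M : A} (m : M ⟶ Aalg.A) : Prop :=
  ∀ (B : T.Algebra) (u : B ⟶ Aalg), Mono u → (∃ g : M ⟶ B.A, g ≫ u.f = m) → IsIso u

end Alg

/-! The algebra morphism `free X ⟶ B` adjoint to a lift `X ⟶ B.A` of the unit is a section of any
subalgebra inclusion `B ⟶ free X` through which `η_X` factors; a mono with a section is an iso. -/

namespace CategoryTheory.Monad

variable {A : Type*} [Category A] {T : Monad A}

theorem isSplitEpi_of_unit_factors {X : A} {B : T.Algebra} (u : B ⟶ T.free.obj X)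
    (h : X ⟶ B.A) (hu : h ≫ u.f = T.η.app X) : IsSplitEpi u :=
  ⟨⟨{ section_ := (T.adj.homEquiv X B).symm h
      id := (T.adj.homEquiv_naturality_right_symm h u).symm.trans <|
        (T.adj.homEquiv X _).symm_apply_eq.mpr <|
          hu.trans (by rw [Adjunction.homEquiv_id, adj_unit]) }⟩⟩

theorem isIso_of_mono_of_unit_factors {X : A} {B : T.Algebra} (u : B ⟶ T.free.obj X) [Mono u]
    (h : X ⟶ B.A) (hu : h ≫ u.f = T.η.app X) : IsIso u :=
  have := isSplitEpi_of_unit_factors u h hu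
  isIso_of_mono_of_isSplitEpi u

end CategoryTheory.Monad

theorem stmt9_general {A : Type u} [Category.{v} A] (T : Monad A)
    (X : A)
    (M : A) (e : X ⟶ M) (m : M ⟶ (T : A ⥤ A).obj X)
    (hfac : e ≫ m = T.η.app X) :
    GeneratedBy ((Monad.free T).obj X) m := by
  rintro B u hu ⟨g, hg⟩
  exact Monad.isIso_of_mono_of_unit_factors u (e ≫ g) (by rw [Category.assoc, hg]; exact hfac)

/-- For a finitary monad `T` on an lfp category, every free algebra on a
finitely presentable object `X` is generated by the finitely generated subobject arising
from the (strong epi, mono)-factorization of the unit `η_X`. -/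
theorem stmt9 {A : Type u} [Category.{v} A] (hA : IsLFP A) (T : Monad A)
    [PreservesFilteredColimitsOfSize.{v, v} (T : A ⥤ A)]
    (X : A) (hX : _root_.IsFinitelyPresentable X)
    (M : A) (e : X ⟶ M) (m : M ⟶ (T : A ⥤ A).obj X)
    [StrongEpi e] [Mono m] (hfac : e ≫ m = T.η.app X) :
    GeneratedBy ((Monad.free T).obj X) m :=
  stmt9_general T X M e m hfac
end

section
/- Let A be an lfp category and Sig(A) = A^{|A_fp|} the category of signatures, where |A_fp| is the discrete category of (representatives of) finitely presentable objects of A. The functor Φ sending a signature Σ to the polynomial endofunctor H_Σ X = ∐_{n∈A_fp} A(n,X)·Σ_n is left adjoint to the forgetful functor U : [A,A]_fin → Sig(A) given by (UF)_n = Fn, and U is monadic. -/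
/-!
The polynomial functor is the composite of `X ↦ (A(σ i, X))ᵢ : A ⥤ Set^ι`, which is finitary
because every `σ i` is finitely presentable, with `S ↦ ∐_{(i, s)} Σᵢ`, which is left adjoint to
`Y ↦ (A(Σᵢ, Y))ᵢ`; so `H_Σ` is finitary. By Yoneda, natural transformations `H_Σ ⟶ F` are
families `Σᵢ ⟶ F (σ i)`, which is the adjunction `Φ ⊣ U`.

Monadicity follows from the crude monadicity theorem. Finitary functors are closed under colimits
in `[A, A]` (colimits commute with colimits), so `U` preserves coequalizers. `U` reflects
isomorphisms: a natural transformation between finitary functors that is invertible at the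
finitely presentable objects is invertible at their filtered colimits, i.e. everywhere.
-/

open CategoryTheory Limits Opposite

universe w v u v₂ u₂

/-- A functor between categories is finitary if it preserves filtered colimits. -/
def Finitary {C : Type u} [Category.{v} C] {D : Type u₂} [Category.{v₂} D] (F : C ⥤ D) : Prop :=
  ∀ (J : Type v) [SmallCategory J] [IsFiltered J], PreservesColimitsOfShape J F

variable {A : Type u} [Category.{v} A] [HasColimits A]

/-- The polynomial endofunctor `H_Σ X = ∐_{i} A(σ i, X) · Σ_i` associated to a signature
`Sgn : ι → A`, where `σ : ι → A` enumerates the finitely presentable objects. -/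
noncomputable def polynomialFunctor {ι : Type v} (σ : ι → A) (Sgn : ι → A) : A ⥤ A where
  obj X := ∐ (fun p : (Σ i : ι, (σ i ⟶ X)) => Sgn p.1)
  map {X Y} f := Sigma.desc fun p =>
    Sigma.ι (fun p : (Σ i : ι, (σ i ⟶ Y)) => Sgn p.1) ⟨p.1, p.2 ≫ f⟩
  map_id X := by
    ext p
    simp only [Sigma.ι_desc]
    rw [Category.comp_id]
    simp
  map_comp {X Y Z} f g := by
    ext p
    rw [← Category.assoc, Sigma.ι_desc]
    simp only [Sigma.ι_desc]
    congr 1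
    simp

/-- The forgetful functor from finitary endofunctors to signatures. -/
def sigForget {ι : Type v} (σ : ι → A) :
    ObjectProperty.FullSubcategory (fun F : A ⥤ A => Finitary F) ⥤ (ι → A) where
  obj F i := F.obj.obj (σ i)
  map {F G} α i := α.hom.app (σ i)

section PiCategory

variable {I : Type v} {C : I → Type u} [∀ i, Category.{v} (C i)] {E : Type*} [Category E]

lemma preservesColimitsOfShape_of_comp_eval (J : Type v) [SmallCategory J] (F : E ⥤ ∀ i, C i)
    (hF : ∀ i, PreservesColimitsOfShape J (F ⋙ Pi.eval C i)) :
    PreservesColimitsOfShape J F where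
  preservesColimit {K} := ⟨fun {c} hc =>
    ⟨pi.coconeOfCoconeEvalIsColimit (F := K ⋙ F) (c := fun i => (F ⋙ Pi.eval C i).mapCocone c)
      fun i => isColimitOfPreserves (F ⋙ Pi.eval C i) hc⟩⟩

end PiCategory

section FinitaryFunctors

variable {C : Type u} [Category.{v} C] {D : Type u₂} [Category.{v₂} D]

lemma Finitary.of_iso {F G : C ⥤ D} (e : F ≅ G) (hF : Finitary F) : Finitary G :=
  fun J _ _ => have := hF J; preservesColimitsOfShape_of_natIso e

lemma Finitary.comp {E : Type*} [Category.{v} E] {F : C ⥤ E} {G : E ⥤ D} (hF : Finitary F)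
    (hG : Finitary G) : Finitary (F ⋙ G) :=
  fun J _ _ => have := hF J; have := hG J; inferInstance

lemma finitary_of_isColimit {K : Type*} [Category K] [HasColimitsOfShape K D] (P : K ⥤ C ⥤ D)
    (hP : ∀ k, Finitary (P.obj k)) {c : Cocone P} (hc : IsColimit c) : Finitary c.pt := by
  refine Finitary.of_iso ((colimitIsoFlipCompColim P).symm ≪≫
    (colimit.isColimit P).coconePointUniqueUpToIso hc) fun J _ _ => ?_
  have : PreservesColimitsOfShape J P.flip :=
    preservesColimitsOfShape_of_evaluation _ _ fun k => hP k J
  infer_instance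

instance (K : Type*) [Category K] [HasColimitsOfShape K D] :
    ObjectProperty.IsClosedUnderColimitsOfShape (Finitary (C := C) (D := D)) K where
  colimitsOfShape_le _ := fun ⟨h⟩ => finitary_of_isColimit _ h.prop_diag_obj h.isColimit

end FinitaryFunctors

section FinitaryNatTrans

variable {C : Type u} [Category.{v} C] {D : Type u₂} [Category.{v₂} D]

namespace CategoryTheory.NatTrans

lemma isIso_app_of_isColimit {F G : C ⥤ D} (α : F ⟶ G) {J : Type*} [Category J]
    {K : J ⥤ C} {c : Cocone K} (hc : IsColimit c) [PreservesColimit K F] [PreservesColimit K G]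
    (h : ∀ j, IsIso (α.app (K.obj j))) : IsIso (α.app c.pt) := by
  have hF := isColimitOfPreserves F hc
  have hG := isColimitOfPreserves G hc
  have : ∀ j, IsIso ((Functor.whiskerLeft K α).app j) := h
  have : IsIso (Functor.whiskerLeft K α) := NatIso.isIso_of_isIso_app _
  have hα : α.app c.pt = (hF.coconePointsIsoOfNatIso hG (asIso (Functor.whiskerLeft K α))).hom :=
    hF.hom_ext fun j => (α.naturality _).trans
      (hF.comp_coconePointsIsoOfNatIso_hom hG (asIso (Functor.whiskerLeft K α)) j).symm
  rw [hα]
  infer_instance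

lemma isIso_of_finitary (hC : ∀ X : C, Nonempty (FilteredFpPresentation X))
    {F G : C ⥤ D} (hF : Finitary F) (hG : Finitary G) (α : F ⟶ G)
    (h : ∀ X, _root_.IsFinitelyPresentable X → IsIso (α.app X)) : IsIso α := by
  have (X : C) : IsIso (α.app X) := by
    obtain ⟨P⟩ := hC X
    obtain ⟨hc⟩ := P.isColimit
    obtain ⟨e⟩ := P.iso
    let := P.cat
    have := P.filt
    have := hF P.J
    have := hG P.J
    rw [isIso_app_iff_of_iso α e.symm]
    exact isIso_app_of_isColimit α hc fun j => h _ (P.fp j)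
  exact NatIso.isIso_of_isIso_app α

end CategoryTheory.NatTrans

end FinitaryNatTrans

section FamilySigma

variable {C : Type u} [Category.{v} C] [HasCoproducts.{v} C] {ι : Type v}

noncomputable def familySigma (Sgn : ι → C) : (ι → Type v) ⥤ C where
  obj S := ∐ fun p : Σ i, S i => Sgn p.1
  map f := Sigma.desc fun p => Sigma.ι (fun p : Σ i, _ => Sgn p.1) ⟨p.1, f p.1 p.2⟩

noncomputable def familySigmaAdj (Sgn : ι → C) :
    familySigma Sgn ⊣ Functor.pi' fun i => coyoneda.obj (op (Sgn i)) :=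
  Adjunction.mkOfUnitCounit
    { unit :=
        { app S i := ↾fun s => Sigma.ι (fun p : Σ i, S i => Sgn p.1) ⟨i, s⟩
          naturality S T f := by
            ext i s
            exact (Sigma.ι_desc
              (fun p : Σ i, S i => Sigma.ι (fun p : Σ i, T i => Sgn p.1) ⟨p.1, f p.1 p.2⟩)
              ⟨i, s⟩).symm }
      counit :=
        { app Y := Sigma.desc fun p : Σ i, (Sgn i ⟶ Y) => p.2
          naturality Y Z f := Sigma.hom_ext _ _ fun p => by
            simp only [familySigma, Functor.comp_map, Functor.id_map, Sigma.ι_desc_assoc]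
            erw [Sigma.ι_desc, Sigma.ι_desc_assoc]
            rfl }
      left_triangle := by
        ext S : 2
        refine Sigma.hom_ext _ _ fun p => ?_
        dsimp [familySigma]
        erw [Sigma.ι_desc_assoc, Category.id_comp, Sigma.ι_desc, Category.comp_id]
        rfl
      right_triangle := by
        ext Y i g
        exact Sigma.ι_desc (fun p : Σ i, (Sgn i ⟶ Y) => p.2) ⟨i, g⟩ }

end FamilySigma

section Polynomial

variable {ι : Type v} (σ : ι → A)

lemma polynomialFunctor_eq_comp (Sgn : ι → A) :
    polynomialFunctor σ Sgn = (Functor.pi' fun i => coyoneda.obj (op (σ i))) ⋙ familySigma Sgn :=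
  rfl

lemma finitary_polynomialFunctor (hσ : ∀ i, _root_.IsFinitelyPresentable (σ i)) (Sgn : ι → A) :
    Finitary (polynomialFunctor σ Sgn) := by
  rw [polynomialFunctor_eq_comp]
  refine Finitary.comp (fun J _ _ => preservesColimitsOfShape_of_comp_eval J _ fun i => ?_)
    fun J _ _ => (familySigmaAdj Sgn).leftAdjoint_preservesColimits.preservesColimitsOfShape
  have := hσ i J
  exact preservesColimitsOfShape_of_natIso
    (Functor.pi'CompEval (fun i => coyoneda.obj (op (σ i))) i).symm

end Polynomial

namespace polynomialFunctor

variable {ι : Type v} (σ Sgn : ι → A) {X Y Z : A}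

noncomputable def inj (i : ι) (g : σ i ⟶ X) : Sgn i ⟶ (polynomialFunctor σ Sgn).obj X :=
  Sigma.ι (fun p : Σ i, (σ i ⟶ X) => Sgn p.1) ⟨i, g⟩

noncomputable def desc (u : ∀ i, (σ i ⟶ X) → (Sgn i ⟶ Z)) : (polynomialFunctor σ Sgn).obj X ⟶ Z :=
  Sigma.desc fun p => u p.1 p.2

variable {σ Sgn}

@[simp]
lemma inj_desc (u : ∀ i, (σ i ⟶ X) → (Sgn i ⟶ Z)) (i : ι) (g : σ i ⟶ X) :
    inj σ Sgn i g ≫ desc σ Sgn u = u i g :=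
  Sigma.ι_desc _ _

@[simp]
lemma inj_desc_assoc (u : ∀ i, (σ i ⟶ X) → (Sgn i ⟶ Y)) (i : ι) (g : σ i ⟶ X) (h : Y ⟶ Z) :
    inj σ Sgn i g ≫ desc σ Sgn u ≫ h = u i g ≫ h := by
  rw [← Category.assoc, inj_desc]

@[simp]
lemma inj_map (f : X ⟶ Y) (i : ι) (g : σ i ⟶ X) :
    inj σ Sgn i g ≫ (polynomialFunctor σ Sgn).map f = inj σ Sgn i (g ≫ f) :=
  Sigma.ι_desc _ _

@[simp]
lemma inj_map_assoc (f : X ⟶ Y) (i : ι) (g : σ i ⟶ X) (h : (polynomialFunctor σ Sgn).obj Y ⟶ Z) :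
    inj σ Sgn i g ≫ (polynomialFunctor σ Sgn).map f ≫ h = inj σ Sgn i (g ≫ f) ≫ h := by
  rw [← Category.assoc, inj_map]

lemma hom_ext {a b : (polynomialFunctor σ Sgn).obj X ⟶ Z}
    (h : ∀ i (g : σ i ⟶ X), inj σ Sgn i g ≫ a = inj σ Sgn i g ≫ b) : a = b :=
  Sigma.hom_ext _ _ fun p => h p.1 p.2

end polynomialFunctor

section PolynomialAdjunction

open polynomialFunctor

variable {ι : Type v} (σ : ι → A)

noncomputable def polynomialFunctorHomEquiv (Sgn : ι → A) (F : A ⥤ A) :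
    (polynomialFunctor σ Sgn ⟶ F) ≃ ∀ i, (Sgn i ⟶ F.obj (σ i)) where
  toFun α i := inj σ Sgn i (𝟙 _) ≫ α.app (σ i)
  invFun u :=
    { app X := desc σ Sgn fun i g => u i ≫ F.map g
      naturality X Y f := hom_ext fun i g => by simp }
  left_inv α := by
    ext X : 2
    refine hom_ext fun i g => ?_
    simp only [inj_desc, Category.assoc, ← α.naturality, inj_map_assoc, Category.id_comp]
  right_inv u := by
    ext i
    simp

noncomputable def polynomialFree (hσ : ∀ i, _root_.IsFinitelyPresentable (σ i)) :
    (ι → A) ⥤ ObjectProperty.FullSubcategory (fun F : A ⥤ A => Finitary F) :=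
  Adjunction.leftAdjointOfEquiv (G := sigForget σ)
    (F_obj := fun Sgn => ⟨polynomialFunctor σ Sgn, finitary_polynomialFunctor σ hσ Sgn⟩)
    (fun Sgn F => InducedCategory.homEquiv.trans (polynomialFunctorHomEquiv σ Sgn F.obj))
    (fun Sgn F G α β => by ext i; exact (Category.assoc _ _ _).symm)

noncomputable def polynomialFreeAdj (hσ : ∀ i, _root_.IsFinitelyPresentable (σ i)) :
    polynomialFree σ hσ ⊣ sigForget σ :=
  Adjunction.adjunctionOfEquivLeft _ _

end PolynomialAdjunction

universe v₁ u₁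

section ULiftHom

variable {C : Type u₁} [Category.{v₁} C] {D : Type u₂} [Category.{v₂} D] {L : C ⥤ D} {G : D ⥤ C}

namespace CategoryTheory.Adjunction

/- Mathlib's monadicity theorems ask both categories to have morphisms in the same universe.
Lifting the morphisms of the base category along `ULiftHom` does not change the category of
algebras, so monadicity can be checked after such a lift. -/

def uliftHomUp (adj : L ⊣ G) : ULiftHom.down.{v₁, u₁, w} ⋙ L ⊣ G ⋙ ULiftHom.up.{v₁, u₁, w} :=
  Adjunction.mkOfUnitCounit
    { unit :=
        { app X := ⟨adj.unit.app X.objDown⟩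
          naturality X Y f := congrArg ULift.up (adj.unit.naturality f.down) }
      counit :=
        { app B := adj.counit.app B
          naturality B B' f := adj.counit.naturality f }
      left_triangle := by
        ext X
        dsimp
        erw [Category.id_comp]
        exact adj.left_triangle_components X.objDown
      right_triangle := by
        ext B
        dsimp
        erw [Category.id_comp]
        exact congrArg ULift.up (adj.right_triangle_components B) }

def uliftHomUpAlgebraEquiv (adj : L ⊣ G) :
    (adj.uliftHomUp.{w}).toMonad.Algebra ≌ adj.toMonad.Algebra where
  functor :=
    { obj X := ⟨X.A.objDown, X.a.down, congrArg ULift.down X.unit, congrArg ULift.down X.assoc⟩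
      map f := ⟨f.f.down, congrArg ULift.down f.h⟩ }
  inverse :=
    { obj X := ⟨ULiftHom.objUp X.A, ⟨X.a⟩, congrArg ULift.up X.unit, congrArg ULift.up X.assoc⟩
      map f := ⟨⟨f.f⟩, congrArg ULift.up f.h⟩ }
  unitIso := Iso.refl _
  counitIso := Iso.refl _

lemma isEquivalence_comparison_of_uliftHomUp (adj : L ⊣ G)
    [(Monad.comparison adj.uliftHomUp.{w}).IsEquivalence] : (Monad.comparison adj).IsEquivalence :=
  inferInstanceAs
    (Monad.comparison adj.uliftHomUp.{w} ⋙ adj.uliftHomUpAlgebraEquiv.functor).IsEquivalence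

end CategoryTheory.Adjunction

end ULiftHom

section SignatureForgetful

variable {C : Type u} [Category.{v} C] {ι : Type v} (σ : ι → C)

lemma sigForget_reflectsIsomorphisms
    (hσ : ∀ X : C, _root_.IsFinitelyPresentable X → ∃ i, Nonempty (X ≅ σ i))
    (hC : ∀ X : C, Nonempty (FilteredFpPresentation X)) : (sigForget σ).ReflectsIsomorphisms where
  reflects {F G} f _ := by
    have hσf (i : ι) : IsIso (f.hom.app (σ i)) :=
      (Pi.eval (fun _ => C) i).map_isIso ((sigForget σ).map f)
    have : IsIso f.hom := NatTrans.isIso_of_finitary hC F.property G.property f.hom fun X hX => by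
      obtain ⟨i, ⟨e⟩⟩ := hσ X hX
      exact (NatTrans.isIso_app_iff_of_iso f.hom e).2 (hσf i)
    have : IsIso ((ObjectProperty.ι _).map f) := this
    exact isIso_of_fully_faithful (ObjectProperty.ι _) f

lemma sigForget_preservesColimits [HasColimits C] :
    PreservesColimitsOfSize.{v, v} (sigForget σ) where
  preservesColimitsOfShape {J} _ := preservesColimitsOfShape_of_comp_eval J _ fun i =>
    inferInstanceAs (PreservesColimitsOfShape J
      (ObjectProperty.ι (fun F : C ⥤ C => Finitary F) ⋙ (evaluation C C).obj (σ i)))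

@[reducible]
noncomputable def sigForgetMonadicRightAdjoint [HasColimits C]
    (hσfp : ∀ i, _root_.IsFinitelyPresentable (σ i))
    (hσ : ∀ X : C, _root_.IsFinitelyPresentable X → ∃ i, Nonempty (X ≅ σ i))
    (hC : ∀ X : C, Nonempty (FilteredFpPresentation X)) : MonadicRightAdjoint (sigForget σ) where
  L := polynomialFree σ hσfp
  adj := polynomialFreeAdj σ hσfp
  eqv := by
    have := sigForget_reflectsIsomorphisms σ hσ hC
    have := sigForget_preservesColimits σ
    have : PreservesColimitsOfSize.{0, 0} (sigForget σ) := preservesColimitsOfSize_shrink _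
    have : (ULiftHom.up : (ι → C) ⥤ ULiftHom.{u} (ι → C)).IsEquivalence :=
      ULiftHom.equiv.isEquivalence_functor
    have : Monad.PreservesColimitOfIsReflexivePair (sigForget σ ⋙ ULiftHom.up) :=
      ⟨fun _ _ _ _ _ => inferInstance⟩
    have := (Monad.monadicOfHasPreservesReflexiveCoequalizersOfReflectsIsomorphisms
      (polynomialFreeAdj σ hσfp).uliftHomUp.{u}).eqv
    exact (polynomialFreeAdj σ hσfp).isEquivalence_comparison_of_uliftHomUp

end SignatureForgetful

/-- For an lfp category `A` with its (small) family `σ : ι → A` of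
representatives of finitely presentable objects, the polynomial-functor construction is
left adjoint to the forgetful functor `U : [A,A]_fin ⥤ Sig(A)`, `(UF)_n = F n`, and `U`
is monadic. -/
theorem stmt15 {A : Type u} [Category.{v} A] [HasColimits A] (hA : IsLFP A)
    (ι : Type v) (σ : ι → A) (hσfp : ∀ i, _root_.IsFinitelyPresentable (σ i))
    (hσall : ∀ X : A, _root_.IsFinitelyPresentable X → ∃ i, Nonempty (X ≅ σ i)) :
    ∃ Φ : (ι → A) ⥤ ObjectProperty.FullSubcategory (fun F : A ⥤ A => Finitary F),
      (∀ Sgn : ι → A, Nonempty ((Φ.obj Sgn).obj ≅ polynomialFunctor σ Sgn)) ∧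
      Nonempty (Φ ⊣ sigForget σ) ∧
      Nonempty (MonadicRightAdjoint (sigForget σ)) := by
  obtain ⟨-, -, hpres⟩ := hA
  exact ⟨polynomialFree σ hσfp, fun Sgn => ⟨Iso.refl _⟩, ⟨polynomialFreeAdj σ hσfp⟩,
    ⟨sigForgetMonadicRightAdjoint σ hσfp hσall hpres⟩⟩
end
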